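/- (Upper bound of Corollary 1) Let W ∈ C^{N×K} have orthonormal columns, B a finite set of unit vectors in C^K, and H = {W b̂ : b̂ ∈ B}. Define D_B = E_h[ min_{b̂∈B} d²(W^H h, b̂) ]. Then the overall distortion satisfies D_H ≤ D_B + d_p(W, R̃), where D_H = E_h[min_{ĥ∈H} d²(h,ĥ)] and d_p(W,R̃) = 1 − Tr(W W^H R̃) with R̃ = E_h[h h^H/‖h‖²]. -/

import Mathlib

open Matrix MeasureTheory

/-- Squared Euclidean norm of a complex vector. -/
noncomputable def nsq {n : ℕ} (x : Fin n → ℂ) : ℝ := (star x ⬝ᵥ x).re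

/-- Squared chordal distance between two (nonzero) complex vectors. -/
noncomputable def chordalSq {n : ℕ} (x y : Fin n → ℂ) : ℝ :=
  1 - (‖star x ⬝ᵥ y‖) ^ 2 / (nsq x * nsq y)

/-- Covariance of the normalized directions `h/‖h‖` under the distribution `μ`. -/
noncomputable def dirCov {N : ℕ} (μ : Measure (Fin N → ℂ)) :
    Matrix (Fin N) (Fin N) ℂ :=
  Matrix.of fun i j => ∫ h, h i * star (h j) / (nsq h : ℂ) ∂μ

/-!
Write `g = Wᴴ h`. Since `W` is an isometry, `⟨h, W b⟩ = ⟨g, b⟩` and `‖W b‖ = ‖b‖ = 1`, so with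
`a = |⟨g, b⟩|² ≤ ‖g‖² ≤ ‖h‖²` the claim reduces pointwise to the scalar inequality
`1 - a/‖h‖² ≤ (1 - a/‖g‖²) + (1 - ‖g‖²/‖h‖²)`, i.e. `(‖g‖² - a)(‖h‖² - ‖g‖²) ≥ 0`. Taking the
minimum over `B` and integrating gives the bound, because `E[‖Wᴴ h‖²/‖h‖²] = Re Tr(W Wᴴ R̃)`.
-/

lemma nsq_eq_norm_sq {n : ℕ} (x : Fin n → ℂ) : nsq x = ‖WithLp.toLp 2 x‖ ^ 2 := by
  rw [nsq, ← inner_self_eq_norm_sq (𝕜 := ℂ), EuclideanSpace.inner_toLp_toLp, dotProduct_comm,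
    RCLike.re_to_complex]

lemma nsq_nonneg {n : ℕ} (x : Fin n → ℂ) : 0 ≤ nsq x := by
  rw [nsq_eq_norm_sq]
  positivity

lemma norm_star_dotProduct_self {n : ℕ} (x : Fin n → ℂ) : ‖star x ⬝ᵥ x‖ = nsq x := by
  rw [nsq, dotProduct_comm, ← EuclideanSpace.inner_toLp_toLp, ← RCLike.re_to_complex]
  exact (inner_self_re_eq_norm _).symm

lemma norm_star_dotProduct_sq_le {n : ℕ} (x y : Fin n → ℂ) :
    ‖star x ⬝ᵥ y‖ ^ 2 ≤ nsq x * nsq y := by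
  rw [nsq_eq_norm_sq, nsq_eq_norm_sq, ← mul_pow, dotProduct_comm,
    ← EuclideanSpace.inner_toLp_toLp]
  exact pow_le_pow_left₀ (norm_nonneg _) (norm_inner_le_norm _ _) 2

lemma norm_apply_mul_norm_apply_le_nsq {n : ℕ} (x : Fin n → ℂ) (i j : Fin n) :
    ‖x i‖ * ‖x j‖ ≤ nsq x := by
  rw [nsq_eq_norm_sq, sq]
  exact mul_le_mul (PiLp.norm_apply_le (WithLp.toLp 2 x) i)
    (PiLp.norm_apply_le (WithLp.toLp 2 x) j) (norm_nonneg _) (norm_nonneg _)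

lemma star_dotProduct_mulVec {m n : ℕ} (A : Matrix (Fin m) (Fin n) ℂ) (x : Fin m → ℂ)
    (y : Fin n → ℂ) : star x ⬝ᵥ A *ᵥ y = star (Aᴴ *ᵥ x) ⬝ᵥ y := by
  rw [star_mulVec, conjTranspose_conjTranspose, dotProduct_mulVec]

lemma nsq_mulVec_of_conjTranspose_mul_self {m n : ℕ} {W : Matrix (Fin m) (Fin n) ℂ}
    (hW : Wᴴ * W = 1) (b : Fin n → ℂ) : nsq (W *ᵥ b) = nsq b := by
  rw [nsq, star_dotProduct_mulVec, mulVec_mulVec, hW, one_mulVec, nsq]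

/-- Bessel's inequality via Cauchy–Schwarz: `‖g‖⁴ = |⟨h, W g⟩|² ≤ ‖h‖² ‖W g‖² = ‖h‖² ‖g‖²`. -/
lemma nsq_conjTranspose_mulVec_le {m n : ℕ} {W : Matrix (Fin m) (Fin n) ℂ}
    (hW : Wᴴ * W = 1) (h : Fin m → ℂ) : nsq (Wᴴ *ᵥ h) ≤ nsq h := by
  set g := Wᴴ *ᵥ h
  have hg : nsq g = ‖star h ⬝ᵥ W *ᵥ g‖ := by
    rw [star_dotProduct_mulVec, norm_star_dotProduct_self]
  have hcs : nsq g ^ 2 ≤ nsq h * nsq g :=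
    calc nsq g ^ 2 = ‖star h ⬝ᵥ W *ᵥ g‖ ^ 2 := by rw [hg]
      _ ≤ nsq h * nsq (W *ᵥ g) := norm_star_dotProduct_sq_le h (W *ᵥ g)
      _ = nsq h * nsq g := by rw [nsq_mulVec_of_conjTranspose_mul_self hW]
  nlinarith [nsq_nonneg g, nsq_nonneg h]

lemma chordalSq_nonneg {n : ℕ} (x y : Fin n → ℂ) : 0 ≤ chordalSq x y := by
  rw [chordalSq, sub_nonneg]
  exact div_le_one_of_le₀ (norm_star_dotProduct_sq_le x y)
    (mul_nonneg (nsq_nonneg x) (nsq_nonneg y))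

lemma chordalSq_le_one {n : ℕ} (x y : Fin n → ℂ) : chordalSq x y ≤ 1 := by
  rw [chordalSq, sub_le_self_iff]
  exact div_nonneg (sq_nonneg _) (mul_nonneg (nsq_nonneg x) (nsq_nonneg y))

lemma div_add_div_le_one_add_div {a g h : ℝ} (ha : 0 ≤ a) (hag : a ≤ g) (hgh : g ≤ h) :
    a / g + g / h ≤ 1 + a / h := by
  rcases (ha.trans hag).eq_or_lt with rfl | hg
  · obtain rfl : a = 0 := le_antisymm hag ha
    simp
  have hh : 0 < h := hg.trans_le hgh
  rw [div_add_div _ _ hg.ne' hh.ne', one_add_div hh.ne', div_le_div_iff₀ (by positivity) hh]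
  nlinarith [mul_nonneg (sub_nonneg.2 hag) (sub_nonneg.2 hgh)]

lemma chordalSq_mulVec_le {m n : ℕ} {W : Matrix (Fin m) (Fin n) ℂ} (hW : Wᴴ * W = 1)
    (h : Fin m → ℂ) {b : Fin n → ℂ} (hb : nsq b = 1) :
    chordalSq h (W *ᵥ b) ≤ chordalSq (Wᴴ *ᵥ h) b + (1 - nsq (Wᴴ *ᵥ h) / nsq h) := by
  have hag : ‖star (Wᴴ *ᵥ h) ⬝ᵥ b‖ ^ 2 ≤ nsq (Wᴴ *ᵥ h) := by
    simpa [hb] using norm_star_dotProduct_sq_le (Wᴴ *ᵥ h) b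
  have := div_add_div_le_one_add_div (sq_nonneg _) hag (nsq_conjTranspose_mulVec_le hW h)
  rw [chordalSq, chordalSq, star_dotProduct_mulVec, nsq_mulVec_of_conjTranspose_mul_self hW, hb,
    mul_one, mul_one]
  linarith

lemma Measurable.finset_inf'_apply {ι α δ : Type*} [MeasurableSpace δ] [MeasurableSpace α]
    [SemilatticeInf α] [MeasurableInf₂ α] {s : Finset ι} (hs : s.Nonempty) {f : ι → δ → α}
    (hf : ∀ i ∈ s, Measurable (f i)) :
    Measurable fun x => s.inf' hs fun i => f i x := by
  convert Finset.inf'_induction hs (p := Measurable) f (fun _ hf _ hg => hf.inf hg) hf using 1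
  ext x
  exact (Finset.inf'_apply hs f x).symm

lemma continuous_nsq {n : ℕ} : Continuous (nsq : (Fin n → ℂ) → ℝ) :=
  Complex.continuous_re.comp (continuous_id.star.dotProduct continuous_id)

lemma measurable_chordalSq_left {n : ℕ} (y : Fin n → ℂ) :
    Measurable fun x : Fin n → ℂ => chordalSq x y := by
  refine measurable_const.sub (Measurable.div ?_ ?_)
  · exact (continuous_id.star.dotProduct continuous_const).norm.pow 2 |>.measurable
  · exact (continuous_nsq.mul continuous_const).measurable

lemma integrable_of_measurable_of_mem_unitInterval {α : Type*} [MeasurableSpace α]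
    {μ : Measure α} [IsFiniteMeasure μ] {f : α → ℝ} (hf : Measurable f) (h0 : ∀ x, 0 ≤ f x)
    (h1 : ∀ x, f x ≤ 1) : Integrable f μ :=
  .of_bound hf.aestronglyMeasurable 1 <| ae_of_all _ fun x => by
    rw [Real.norm_of_nonneg (h0 x)]
    exact h1 x

lemma integrable_dirCov_integrand {N : ℕ} (μ : Measure (Fin N → ℂ)) [IsFiniteMeasure μ]
    (i j : Fin N) : Integrable (fun h : Fin N → ℂ => h i * star (h j) / (nsq h : ℂ)) μ := by
  refine .of_bound (Measurable.aestronglyMeasurable ?_) 1 (ae_of_all _ fun h => ?_)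
  · exact (((continuous_apply i).mul (continuous_apply j).star).measurable).div
      (Complex.continuous_ofReal.comp continuous_nsq).measurable
  · rw [norm_div, norm_mul, norm_star, Complex.norm_of_nonneg (nsq_nonneg h)]
    exact div_le_one_of_le₀ (norm_apply_mul_norm_apply_le_nsq h i j) (nsq_nonneg h)

lemma star_dotProduct_mulVec_div_nsq_eq_sum {n : ℕ} (P : Matrix (Fin n) (Fin n) ℂ)
    (h : Fin n → ℂ) :
    (star h ⬝ᵥ P *ᵥ h) / (nsq h : ℂ) = ∑ i, ∑ j, P i j * (h j * star (h i) / (nsq h : ℂ)) := by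
  simp only [dotProduct, mulVec, Pi.star_apply, Finset.sum_div, Finset.mul_sum]
  exact Finset.sum_congr rfl fun i _ => Finset.sum_congr rfl fun j _ => by ring

section dirCov

variable {N : ℕ} (μ : Measure (Fin N → ℂ)) [IsFiniteMeasure μ] (P : Matrix (Fin N) (Fin N) ℂ)

lemma integrable_star_dotProduct_mulVec_div_nsq :
    Integrable (fun h => (star h ⬝ᵥ P *ᵥ h) / (nsq h : ℂ)) μ := by
  simp_rw [star_dotProduct_mulVec_div_nsq_eq_sum]
  exact integrable_finsetSum _ fun i _ => integrable_finsetSum _ fun j _ =>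
    (integrable_dirCov_integrand μ j i).const_mul _

lemma trace_mul_dirCov :
    (P * dirCov μ).trace = ∫ h, (star h ⬝ᵥ P *ᵥ h) / (nsq h : ℂ) ∂μ := by
  have hint (i j : Fin N) :
      Integrable (fun h : Fin N → ℂ => P i j * (h j * star (h i) / (nsq h : ℂ))) μ :=
    (integrable_dirCov_integrand μ j i).const_mul _
  simp_rw [star_dotProduct_mulVec_div_nsq_eq_sum]
  rw [integral_finsetSum _ fun i _ => integrable_finsetSum _ fun j _ => hint i j, trace]
  refine Finset.sum_congr rfl fun i _ => ?_
  rw [integral_finsetSum _ fun j _ => hint i j, diag_apply, mul_apply]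
  exact Finset.sum_congr rfl fun j _ => (integral_const_mul _ _).symm

lemma re_trace_mul_conjTranspose_mul_dirCov {K : ℕ} (W : Matrix (Fin N) (Fin K) ℂ) :
    ((W * Wᴴ * dirCov μ).trace).re = ∫ h, nsq (Wᴴ *ᵥ h) / nsq h ∂μ := by
  rw [trace_mul_dirCov, ← RCLike.re_to_complex,
    ← integral_re (integrable_star_dotProduct_mulVec_div_nsq μ _)]
  refine integral_congr_ae (ae_of_all _ fun h => ?_)
  dsimp only
  rw [RCLike.re_to_complex, ← mulVec_mulVec, star_dotProduct_mulVec, Complex.div_ofReal_re]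
  rfl

end dirCov

lemma inf'_chordalSq_mulVec_le {m n : ℕ} {W : Matrix (Fin m) (Fin n) ℂ} (hW : Wᴴ * W = 1)
    {B : Finset (Fin n → ℂ)} (hne : B.Nonempty) (hcode : ∀ b ∈ B, nsq b = 1)
    (h : Fin m → ℂ) :
    B.inf' hne (fun b => chordalSq h (W *ᵥ b))
      ≤ B.inf' hne (fun b => chordalSq (Wᴴ *ᵥ h) b) + (1 - nsq (Wᴴ *ᵥ h) / nsq h) := by
  obtain ⟨b, hb, hmin⟩ := Finset.exists_mem_eq_inf' hne fun b => chordalSq (Wᴴ *ᵥ h) b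
  rw [hmin]
  exact (Finset.inf'_le _ hb).trans (chordalSq_mulVec_le hW h (hcode b hb))

theorem distortion_upper_bound_general {N K : ℕ}
    (μ : Measure (Fin N → ℂ)) [IsProbabilityMeasure μ]
    (W : Matrix (Fin N) (Fin K) ℂ) (hW : Wᴴ * W = 1)
    (B : Finset (Fin K → ℂ)) (hne : B.Nonempty)
    (hcode : ∀ b ∈ B, nsq b = 1) :
    (∫ h, B.inf' hne (fun b => chordalSq h (W.mulVec b)) ∂μ)
      ≤ (∫ h, B.inf' hne (fun b => chordalSq (Wᴴ.mulVec h) b) ∂μ)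
        + (1 - ((W * Wᴴ * dirCov μ).trace).re) := by
  have hadj : Measurable fun h : Fin N → ℂ => Wᴴ *ᵥ h :=
    (continuous_const.matrix_mulVec continuous_id).measurable
  have hD_B : Integrable (fun h => B.inf' hne fun b => chordalSq (Wᴴ *ᵥ h) b) μ :=
    integrable_of_measurable_of_mem_unitInterval
      (Measurable.finset_inf'_apply hne fun b _ => (measurable_chordalSq_left b).comp hadj)
      (fun h => Finset.le_inf' _ _ fun b _ => chordalSq_nonneg _ _)
      (fun h => (Finset.inf'_le _ hne.choose_spec).trans (chordalSq_le_one _ _))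
  have hratio : Integrable (fun h => nsq (Wᴴ *ᵥ h) / nsq h) μ :=
    integrable_of_measurable_of_mem_unitInterval
      ((continuous_nsq.measurable.comp hadj).div continuous_nsq.measurable)
      (fun h => div_nonneg (nsq_nonneg _) (nsq_nonneg h))
      (fun h => div_le_one_of_le₀ (nsq_conjTranspose_mulVec_le hW h) (nsq_nonneg h))
  have hprojection : Integrable (fun h => 1 - nsq (Wᴴ *ᵥ h) / nsq h) μ :=
    (integrable_const 1).sub hratio
  rw [re_trace_mul_conjTranspose_mul_dirCov]
  calc _ ≤ ∫ h, ((B.inf' hne fun b => chordalSq (Wᴴ *ᵥ h) b) + (1 - nsq (Wᴴ *ᵥ h) / nsq h)) ∂μ :=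
        integral_mono_of_nonneg
          (ae_of_all _ fun h => Finset.le_inf' _ _ fun b _ => chordalSq_nonneg _ _)
          (hD_B.add hprojection) (ae_of_all _ (inf'_chordalSq_mulVec_le hW hne hcode))
    _ = _ := by
        rw [integral_add hD_B hprojection, integral_sub (integrable_const 1) hratio, integral_const]
        simp

/-- Upper bound of Corollary 1: for the induced codebook `H = W B`, the overall
distortion is at most the subband distortion `D_B` plus the projection
distortion `d_p(W,R̃)`. -/
theorem distortion_upper_bound {N K : ℕ}
    (μ : Measure (Fin N → ℂ)) [IsProbabilityMeasure μ]
    (W : Matrix (Fin N) (Fin K) ℂ) (hW : Wᴴ * W = 1)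
    (B : Finset (Fin K → ℂ)) (hne : B.Nonempty)
    (hcode : ∀ b ∈ B, nsq b = 1)
    (hnz : ∀ᵐ h ∂μ, h ≠ 0 ∧ Wᴴ.mulVec h ≠ 0) :
    (∫ h, B.inf' hne (fun b => chordalSq h (W.mulVec b)) ∂μ)
      ≤ (∫ h, B.inf' hne (fun b => chordalSq (Wᴴ.mulVec h) b) ∂μ)
        + (1 - ((W * Wᴴ * dirCov μ).trace).re) :=
  distortion_upper_bound_general μ W hW B hne hcode
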